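/- Let p > 2 be a prime, F an algebraically closed field of characteristic p, and W a reduced representation of C_{2p} over F such that F[W]^{C_{2p}} is Cohen-Macaulay. If dim W = 2, then W is isomorphic to one of V_2^+, 2V_1^-, V_2^-. If dim W = 3, then W is isomorphic to one of V_2^+ ⊕ V_1^-, V_3^+, 3V_1^-, V_3^-, V_2^- ⊕ V_1^-. -/

import Mathlib

open MvPolynomial

set_option synthInstance.maxHeartbeats 1000000
set_option maxHeartbeats 1000000

noncomputable section

variable (F : Type) [Field F]

/-- The invariant ring (fixed subalgebra) of the algebra endomorphism `σ`;
for `σ` the action of a generator of a finite cyclic group, this is the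
ring of invariants of that group. -/
def inva {n : ℕ} (σ : MvPolynomial (Fin n) F →ₐ[F] MvPolynomial (Fin n) F) :
    Subalgebra F (MvPolynomial (Fin n) F) :=
  AlgHom.equalizer σ (AlgHom.id F _)

/-- The linear substitution action of a matrix on the polynomial ring. -/
def matAct {n : ℕ} (M : Matrix (Fin n) (Fin n) F) :
    MvPolynomial (Fin n) F →ₐ[F] MvPolynomial (Fin n) F :=
  aeval fun i => ∑ j, C (M i j) * X j

/-- The irrelevant (maximal graded) ideal of a graded subalgebra of a
polynomial ring: elements with vanishing constant term. -/
def mmax {n : ℕ} (A : Subalgebra F (MvPolynomial (Fin n) F)) : Ideal A :=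
  RingHom.ker ((constantCoeff : MvPolynomial (Fin n) F →+* F).comp A.val.toRingHom)

/-- A graded subalgebra of a polynomial ring is Cohen-Macaulay iff there
is a regular sequence in the irrelevant maximal ideal whose length is the
Krull dimension (i.e. depth = dimension). -/
def IsCM {n : ℕ} (A : Subalgebra F (MvPolynomial (Fin n) F)) : Prop :=
  ∃ rs : List A, (∀ r ∈ rs, r ∈ mmax F A) ∧ RingTheory.Sequence.IsRegular (↥A) rs ∧
    (rs.length : WithBot ℕ∞) = ringKrullDim ↥A

/-- Gorenstein: Cohen-Macaulay, with one-dimensional socle modulo a maximal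
regular sequence (a homogeneous system of parameters). -/
def IsGor {n : ℕ} (A : Subalgebra F (MvPolynomial (Fin n) F)) : Prop :=
  ∃ rs : List A, (∀ r ∈ rs, r ∈ mmax F A) ∧ RingTheory.Sequence.IsRegular (↥A) rs ∧
    (rs.length : WithBot ℕ∞) = ringKrullDim ↥A ∧
    Module.finrank F (Submodule.restrictScalars F
      ((⊥ : Ideal (↥A ⧸ Ideal.span {x : ↥A | x ∈ rs})).colon
        ((mmax F A).map (Ideal.Quotient.mk (Ideal.span {x : ↥A | x ∈ rs}))))) = 1

/-- A commutative `F`-algebra is a hypersurface if it is isomorphic to a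
polynomial ring modulo a single principal ideal. -/
def IsHypersurface (A : Type) [CommRing A] [Algebra F A] : Prop :=
  ∃ (m : ℕ) (f : MvPolynomial (Fin m) F),
    Nonempty (A ≃ₐ[F] (MvPolynomial (Fin m) F ⧸ Ideal.span {f}))

/-- Similarity (conjugacy) of square matrices, i.e. isomorphism of the
corresponding representations. -/
def MatSimilar {n : ℕ} (M N : Matrix (Fin n) (Fin n) F) : Prop :=
  ∃ P : (Matrix (Fin n) (Fin n) F)ˣ,
    (P : Matrix (Fin n) (Fin n) F) * M * ((P⁻¹ : (Matrix (Fin n) (Fin n) F)ˣ) :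
      Matrix (Fin n) (Fin n) F) = N

/-- The representation given by `M` has a direct summand isomorphic to the
one-dimensional trivial representation. -/
def HasTrivialSummand {n : ℕ} (M : Matrix (Fin n) (Fin n) F) : Prop :=
  ∃ v : Fin n → F, v ≠ 0 ∧ M.mulVec v = v ∧
    ∃ Uc : Submodule F (Fin n → F), IsCompl (Submodule.span F {v}) Uc ∧
      ∀ u ∈ Uc, M.mulVec u ∈ Uc

/-- A representation is reduced if no indecomposable direct summand is the
one-dimensional trivial representation. -/
def Reduced {n : ℕ} (M : Matrix (Fin n) (Fin n) F) : Prop :=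
  ¬ HasTrivialSummand F M

/-- Matrix consisting of Jordan-like blocks: diagonal entries given by `d`,
with subdiagonal entries `1` exactly at the columns in `ones`. -/
def jmat (n : ℕ) (d : ℕ → F) (ones : Finset ℕ) : Matrix (Fin n) (Fin n) F :=
  fun i j => if (i : ℕ) = j then d i else
    if (i : ℕ) = (j : ℕ) + 1 ∧ (j : ℕ) ∈ ones then 1 else 0



/-! Since `p` is odd and `M ^ (2p) = 1`, the space splits into the `M`-stable pieces
`ker (M ^ p - 1) ⊕ ker (M ^ p + 1)`; by Frobenius `(M ∓ 1) ^ p = M ^ p ∓ 1`, so `M - 1`, resp.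
`M + 1`, is nilpotent on them, of index at most their dimension. In dimension at most three a
nilpotent matrix is determined up to similarity by which of its powers vanish, which gives the
Jordan forms on the list. Reducedness rules out everything else: a `+1`-piece of dimension one,
or one on which `M - 1` has a Jordan block of size one, splits off a trivial summand. -/

namespace C2pRep

variable {F} {n : ℕ}
open Matrix Module

theorem linearIndependent_pow_apply {K V : Type*} [Field K] [AddCommGroup V] [Module K V]
    (f : Module.End K V) {v : V} :
    ∀ {d : ℕ}, (f ^ (d + 1)) v = 0 → (f ^ d) v ≠ 0 →
      LinearIndependent K fun i : Fin (d + 1) => (f ^ (i : ℕ)) v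
  | 0, _, hv => show LinearIndependent K fun i : Fin 1 => _ from
      linearIndependent_unique_iff.mpr (by simpa using hv)
  | d + 1, h, hv => by
    have hpow : ∀ i : ℕ, (f ^ (i + 1)) v = (f ^ i) (f v) := fun i => by
      rw [pow_succ, Module.End.mul_apply]
    rw [linearIndependent_finSucc]
    constructor
    · convert linearIndependent_pow_apply f (v := f v) (d := d)
        (by rwa [← hpow]) (by rwa [← hpow]) using 1
      ext i
      exact hpow i
    · intro hspan
      have hker : Submodule.span K (Set.range (Fin.tail fun i : Fin (d + 2) => (f ^ (i : ℕ)) v))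
          ≤ LinearMap.ker (f ^ (d + 1)) := by
        rw [Submodule.span_le]
        rintro _ ⟨i, rfl⟩
        rw [SetLike.mem_coe, LinearMap.mem_ker, Fin.tail, Fin.val_succ, ← Module.End.mul_apply,
          ← pow_add, show d + 1 + (i + 1) = i + (d + 2) by omega, pow_add, Module.End.mul_apply,
          h, map_zero]
      exact hv (hker (by simpa using hspan))

theorem linearIndependent_pow_mulVec {A : Matrix (Fin n) (Fin n) F} {v : Fin n → F} {d : ℕ}
    (h : (A ^ (d + 1)) *ᵥ v = 0) (hv : (A ^ d) *ᵥ v ≠ 0) :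
    LinearIndependent F fun i : Fin (d + 1) => (A ^ (i : ℕ)) *ᵥ v := by
  simp only [← toLin'_apply, toLin'_pow] at h hv ⊢
  exact linearIndependent_pow_apply _ h hv

theorem linearIndependent_pair_mulVec {C : Matrix (Fin n) (Fin n) F} {v : Fin n → F}
    (h : C *ᵥ C *ᵥ v = 0) (hv : C *ᵥ v ≠ 0) : LinearIndependent F ![v, C *ᵥ v] := by
  convert linearIndependent_pow_mulVec (d := 1) (v := v) (by simpa [sq, ← mulVec_mulVec] using h)
    (by simpa using hv) using 1
  funext i
  fin_cases i <;> simp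

theorem linearIndependent_three_of_pair {V : Type*} [AddCommGroup V] [Module F V] {x y z : V}
    (hxy : LinearIndependent F ![x, y]) (hz : z ∉ Submodule.span F {x, y}) :
    LinearIndependent F ![x, y, z] := by
  rw [show ![x, y, z] = Fin.snoc ![x, y] z by funext i; fin_cases i <;> rfl]
  exact hxy.finSnoc (by simpa [Set.pair_comm] using hz)

theorem exists_mulVec_ne_zero {A : Matrix (Fin n) (Fin n) F} (h : A ≠ 0) : ∃ v, A *ᵥ v ≠ 0 := by
  by_contra! hA
  exact h (ext_iff_mulVec.mpr fun v => by simp [hA v])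

theorem exists_mulVec_eq_zero_notMem_span {C : Matrix (Fin 3) (Fin 3) F} (h : C ^ 2 = 0)
    (u : Fin 3 → F) : ∃ w, C *ᵥ w = 0 ∧ w ∉ Submodule.span F {u} := by
  have hrange : LinearMap.range C.mulVecLin ≤ LinearMap.ker C.mulVecLin := by
    rintro _ ⟨y, rfl⟩
    simp [mulVec_mulVec, ← sq, h]
  have hker : ¬ LinearMap.ker C.mulVecLin ≤ Submodule.span F {u} := fun hle => by
    have := LinearMap.finrank_range_add_finrank_ker C.mulVecLin
    have := Submodule.finrank_mono hrange
    have := Submodule.finrank_mono hle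
    have := finrank_span_le_card (R := F) ({u} : Set (Fin 3 → F))
    simp only [finrank_fin_fun, Set.toFinset_singleton, Finset.card_singleton] at *
    omega
  simpa using SetLike.not_le_iff_exists.mp hker

theorem mulVec_pow_sub_smul_mulVec (M : Matrix (Fin n) (Fin n) F) (s : F) (k : ℕ)
    (v : Fin n → F) :
    M *ᵥ ((M - s • 1) ^ k) *ᵥ v = s • ((M - s • 1) ^ k) *ᵥ v + ((M - s • 1) ^ (k + 1)) *ᵥ v := by
  rw [mulVec_mulVec, ← smul_mulVec, ← add_mulVec, pow_succ']
  congr 1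
  nth_rewrite 1 [show M = s • 1 + (M - s • 1) by abel]
  rw [add_mul, smul_one_mul]

theorem mulVec_sub_smul_mem {M : Matrix (Fin n) (Fin n) F} {K : Submodule F (Fin n → F)}
    (hK : ∀ v ∈ K, M *ᵥ v ∈ K) (s : F) : ∀ v ∈ K, (M - s • 1) *ᵥ v ∈ K := fun v hv => by
  rw [sub_mulVec, smul_mulVec, one_mulVec]
  exact K.sub_mem (hK v hv) (K.smul_mem s hv)

theorem matSimilar_of_linearIndependent {M N : Matrix (Fin n) (Fin n) F}
    (b : Fin n → Fin n → F) (hb : LinearIndependent F b)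
    (hMb : ∀ j, M *ᵥ b j = ∑ k, N k j • b k) : MatSimilar F M N := by
  obtain ⟨Q, hQ⟩ : IsUnit (Matrix.of b)ᵀ := linearIndependent_cols_iff_isUnit.mp hb
  have hMQ : M * Q = Q * N := by
    ext i j
    simpa [hQ, Matrix.mul_apply, Matrix.mulVec, dotProduct, Finset.sum_apply, mul_comm]
      using congrFun (hMb j) i
  refine ⟨Q⁻¹, ?_⟩
  rw [inv_inv, mul_assoc, hMQ, ← mul_assoc, Units.inv_mul, one_mul]

theorem sum_jmat_smul {V : Type*} [AddCommGroup V] [Module F V] (d : ℕ → F) (ones : Finset ℕ)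
    (b : Fin n → V) (j : Fin n) :
    ∑ k, jmat F n d ones k j • b k =
      d j • b j + ∑ k : Fin n, if (k : ℕ) = j + 1 ∧ (j : ℕ) ∈ ones then b k else 0 := by
  have hsplit : ∀ k, jmat F n d ones k j • b k =
      (if k = j then d j • b j else 0) +
        if (k : ℕ) = j + 1 ∧ (j : ℕ) ∈ ones then b k else 0 := by
    intro k
    unfold jmat
    by_cases hkj : k = j
    · subst hkj; simp
    · have : (k : ℕ) ≠ j := fun h => hkj (Fin.ext h)
      split_ifs <;> simp_all
  rw [Finset.sum_congr rfl fun k _ => hsplit k, Finset.sum_add_distrib, Finset.sum_ite_eq']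
  simp

theorem matSimilar_jmat_empty {M : Matrix (Fin n) (Fin n) F} {s : F} (h : M - s • 1 = 0) :
    MatSimilar F M (jmat F n (fun _ => s) ∅) := by
  refine ⟨1, ?_⟩
  ext i j
  rw [sub_eq_zero.mp h]
  simp [jmat, Matrix.one_apply, Fin.ext_iff]

theorem matSimilar_jmat_range {d : ℕ} {M : Matrix (Fin (d + 1)) (Fin (d + 1)) F} {s : F}
    (h : (M - s • 1) ^ (d + 1) = 0) {v : Fin (d + 1) → F} (hv : ((M - s • 1) ^ d) *ᵥ v ≠ 0) :
    MatSimilar F M (jmat F (d + 1) (fun _ => s) (Finset.range d)) := by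
  refine matSimilar_of_linearIndependent _
    (linearIndependent_pow_mulVec (by rw [h, zero_mulVec]) hv) fun j => ?_
  rw [sum_jmat_smul, mulVec_pow_sub_smul_mulVec]
  congr 1
  by_cases hj : (j : ℕ) < d
  · rw [Finset.sum_eq_single ⟨j + 1, by omega⟩ (fun k _ hk => if_neg fun h => hk (Fin.ext h.1))
      (by simp)]
    simp [hj]
  · rw [show (j : ℕ) + 1 = d + 1 by omega, h, zero_mulVec]
    exact (Finset.sum_eq_zero fun k _ => if_neg (by simp [hj])).symm

theorem matSimilar_jmat_three_zero {M : Matrix (Fin 3) (Fin 3) F} (d : ℕ → F)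
    {x y z : Fin 3 → F} (hxyz : LinearIndependent F ![x, y, z])
    (hx : M *ᵥ x = d 0 • x + y) (hy : M *ᵥ y = d 1 • y) (hz : M *ᵥ z = d 2 • z) :
    MatSimilar F M (jmat F 3 d {0}) := by
  refine matSimilar_of_linearIndependent _ hxyz fun j => ?_
  fin_cases j <;> simp [sum_jmat_smul, Fin.sum_univ_three, hx, hy, hz]

theorem matSimilar_jmat_of_sq_eq_zero {M : Matrix (Fin 2) (Fin 2) F} {s : F}
    (h : (M - s • 1) ^ 2 = 0) :
    MatSimilar F M (jmat F 2 (fun _ => s) ∅) ∨ MatSimilar F M (jmat F 2 (fun _ => s) {0}) := by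
  by_cases h0 : M - s • 1 = 0
  · exact .inl (matSimilar_jmat_empty h0)
  · obtain ⟨v, hv⟩ := exists_mulVec_ne_zero h0
    exact .inr (matSimilar_jmat_range (d := 1) h (v := v) (by simpa using hv))

theorem matSimilar_jmat_of_pow_three_eq_zero {M : Matrix (Fin 3) (Fin 3) F} {s : F}
    (h : (M - s • 1) ^ 3 = 0) :
    MatSimilar F M (jmat F 3 (fun _ => s) ∅) ∨ MatSimilar F M (jmat F 3 (fun _ => s) {0}) ∨
      MatSimilar F M (jmat F 3 (fun _ => s) {0, 1}) := by
  set C := M - s • 1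
  have hMC : ∀ (k : ℕ) (x : Fin 3 → F), M *ᵥ (C ^ k) *ᵥ x = s • (C ^ k) *ᵥ x + (C ^ (k + 1)) *ᵥ x :=
    mulVec_pow_sub_smul_mulVec M s
  by_cases h0 : C = 0
  · exact .inl (matSimilar_jmat_empty h0)
  by_cases h2 : C ^ 2 = 0
  · obtain ⟨v, hv⟩ := exists_mulVec_ne_zero h0
    obtain ⟨w, hw, hwv⟩ := exists_mulVec_eq_zero_notMem_span h2 (C *ᵥ v)
    have hC2v : C *ᵥ C *ᵥ v = 0 := by rw [mulVec_mulVec, ← sq, h2, zero_mulVec]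
    have hw_span : w ∉ Submodule.span F {v, C *ᵥ v} := by
      intro hmem
      obtain ⟨a, b, hab⟩ := Submodule.mem_span_pair.mp hmem
      have hCw := congrArg (C *ᵥ ·) hab
      simp only [mulVec_add, mulVec_smul, hC2v, hw, smul_zero, add_zero, smul_eq_zero, hv,
        or_false] at hCw
      rw [← hab, hCw, zero_smul, zero_add] at hwv
      exact hwv (Submodule.smul_mem _ _ (Submodule.mem_span_singleton_self _))
    refine .inr (.inl (matSimilar_jmat_three_zero _
      (linearIndependent_three_of_pair (linearIndependent_pair_mulVec hC2v hv) hw_span) ?_ ?_ ?_))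
    · simpa using hMC 0 v
    · simpa [h2] using hMC 1 v
    · simpa [hw] using hMC 0 w
  · obtain ⟨v, hv⟩ := exists_mulVec_ne_zero h2
    exact .inr (.inr (matSimilar_jmat_range (d := 2) h hv))

theorem hasTrivialSummand_of_isCompl {M : Matrix (Fin n) (Fin n) F}
    {K U : Submodule F (Fin n → F)} (hKU : IsCompl K U) (hK : K ≠ ⊥)
    (hfix : ∀ v ∈ K, M *ᵥ v = v) (hU : ∀ u ∈ U, M *ᵥ u ∈ U) : HasTrivialSummand F M := by
  obtain ⟨v, hvK, hv0⟩ := Submodule.exists_mem_ne_zero_of_ne_bot hK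
  have hUv : Disjoint U (Submodule.span F {v}) :=
    hKU.symm.disjoint.mono_right ((Submodule.span_singleton_le_iff_mem _ _).mpr hvK)
  obtain ⟨W, hUW, hW⟩ := hUv.exists_isCompl
  refine ⟨v, hv0, hfix v hvK, W, hW.symm, fun x hx => ?_⟩
  -- `M` moves `k + u` by `M u - u ∈ U ⊆ W`
  obtain ⟨k, hk, u, hu, rfl⟩ := Submodule.mem_sup.mp (hKU.sup_eq_top ▸ Submodule.mem_top (x := x))
  rw [show M *ᵥ (k + u) = (k + u) + (M *ᵥ u - u) by rw [mulVec_add, hfix k hk]; abel]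
  exact W.add_mem hx (W.sub_mem (hUW (hU u hu)) (hUW hu))

theorem hasTrivialSummand_of_dotProduct_ne_zero {M : Matrix (Fin n) (Fin n) F}
    {v w : Fin n → F} (hv : M *ᵥ v = v) (hw : w ᵥ* M = w) (hwv : w ⬝ᵥ v ≠ 0) :
    HasTrivialSummand F M := by
  set f := dotProductBilin F F w
  have hf : ∀ x, f x = w ⬝ᵥ x := fun x => rfl
  have hv0 : v ≠ 0 := by rintro rfl; simp at hwv
  refine ⟨v, hv0, hv, LinearMap.ker f, ?_, fun u hu => ?_⟩
  · refine (Module.Dual.isCompl_ker_of_disjoint_of_ne_bot (f := f)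
      (fun h => hwv (by rw [← hf, h, LinearMap.zero_apply])) ?_ (by simpa using hv0)).symm
    rw [Submodule.disjoint_def]
    intro x hxf hxv
    obtain ⟨c, rfl⟩ := Submodule.mem_span_singleton.mp hxv
    simp_all
  · rw [LinearMap.mem_ker, hf, dotProduct_mulVec, hw, ← hf]
    exact hu

theorem hasTrivialSummand_of_matSimilar {M N : Matrix (Fin n) (Fin n) F} (h : MatSimilar F M N)
    {v w : Fin n → F} (hv : N *ᵥ v = v) (hw : w ᵥ* N = w) (hwv : w ⬝ᵥ v ≠ 0) :
    HasTrivialSummand F M := by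
  obtain ⟨P, rfl⟩ := h
  refine hasTrivialSummand_of_dotProduct_ne_zero (v := ↑P⁻¹ *ᵥ v) (w := w ᵥ* ↑P) ?_ ?_ ?_
  · conv_rhs => rw [← hv]
    simp only [mulVec_mulVec, ← mul_assoc, Units.inv_mul, one_mul]
  · conv_rhs => rw [← hw]
    simp only [vecMul_vecMul, mul_assoc, Units.inv_mul, mul_one]
  · rwa [dotProduct_mulVec, vecMul_vecMul, Units.mul_inv, vecMul_one]

theorem hasTrivialSummand_of_matSimilar_jmat {m : ℕ} {M : Matrix (Fin (m + 1)) (Fin (m + 1)) F}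
    {ones : Finset ℕ} (hones : ∀ j ∈ ones, j + 1 ≠ m)
    (h : MatSimilar F M (jmat F (m + 1) (fun _ => 1) ones)) : HasTrivialSummand F M := by
  refine hasTrivialSummand_of_matSimilar h (v := Pi.single (Fin.last m) 1)
    (w := Pi.single (Fin.last m) 1) ?_ ?_ (by simp)
  · ext i
    rw [mulVec_single_one]
    by_cases hi : i = Fin.last m
    · simp [hi, jmat]
    · have hi' : (i : ℕ) ≠ m := fun h => hi (Fin.ext h)
      simp [hi, hi', jmat, show (i : ℕ) ≠ m + 1 by omega]
  · ext j
    rw [single_one_vecMul]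
    by_cases hj : j = Fin.last m
    · simp [hj, jmat]
    · have hj' : m ≠ j := fun h => hj (Fin.ext h.symm)
      simp only [row_apply, jmat, Fin.val_last, hj', if_false, hj, ne_eq, not_false_eq_true,
        Pi.single_eq_of_ne, ite_eq_right_iff, one_ne_zero, imp_false, not_and]
      exact fun h => (hones j · h.symm)

theorem isCompl_ker_sub_one_ker_add_one {A : Matrix (Fin n) (Fin n) F} (hA : A * A = 1)
    (h2 : (2 : F) ≠ 0) :
    IsCompl (LinearMap.ker (A - 1).mulVecLin) (LinearMap.ker (A + 1).mulVecLin) := by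
  have h₁ : (A - 1) * (A + 1) = 0 := by
    rw [show (A - 1) * (A + 1) = A * A - 1 by noncomm_ring, hA, sub_self]
  have h₂ : (A + 1) * (A - 1) = 0 := by
    rw [show (A + 1) * (A - 1) = A * A - 1 by noncomm_ring, hA, sub_self]
  constructor
  · rw [Submodule.disjoint_def]
    intro v hv₁ hv₂
    simp only [LinearMap.mem_ker, mulVecLin_apply, sub_mulVec, add_mulVec, one_mulVec,
      sub_eq_zero] at hv₁ hv₂
    have : (2 : F) • v = 0 := by rw [two_smul]; nth_rewrite 1 [← hv₁]; rw [hv₂]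
    exact (smul_eq_zero.mp this).resolve_left h2
  · rw [codisjoint_iff, Submodule.eq_top_iff']
    intro v
    -- `v = ½ (A + 1) v - ½ (A - 1) v`
    refine Submodule.mem_sup.mpr
      ⟨(2⁻¹ : F) • (A + 1) *ᵥ v, ?_, -((2⁻¹ : F) • (A - 1) *ᵥ v), ?_, ?_⟩
    · simp only [LinearMap.mem_ker, mulVecLin_apply, mulVec_smul, mulVec_mulVec, h₁, zero_mulVec,
        smul_zero]
    · simp only [LinearMap.mem_ker, mulVecLin_apply, mulVec_neg, mulVec_smul, mulVec_mulVec, h₂,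
        zero_mulVec, smul_zero, neg_zero]
    · rw [← sub_eq_add_neg, ← smul_sub, ← sub_mulVec, add_sub_sub_cancel,
        ← two_smul F (1 : Matrix _ _ F), smul_mulVec, one_mulVec, smul_smul, inv_mul_cancel₀ h2,
        one_smul]

theorem mulVec_mem_ker_of_commute {A N : Matrix (Fin n) (Fin n) F} (h : Commute N A)
    {v : Fin n → F} (hv : v ∈ LinearMap.ker N.mulVecLin) :
    A *ᵥ v ∈ LinearMap.ker N.mulVecLin := by
  rw [LinearMap.mem_ker, mulVecLin_apply] at hv ⊢
  rw [mulVec_mulVec, h.eq, ← mulVec_mulVec, hv, mulVec_zero]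

theorem pow_finrank_mulVec_eq_zero {A : Matrix (Fin n) (Fin n) F}
    {K : Submodule F (Fin n → F)} (hK : ∀ v ∈ K, A *ᵥ v ∈ K) {k : ℕ}
    (hk : ∀ v ∈ K, (A ^ k) *ᵥ v = 0) {v : Fin n → F} (hv : v ∈ K) :
    (A ^ finrank F K) *ᵥ v = 0 := by
  have hK' : ∀ x ∈ K, toLin' A x ∈ K := by simpa only [toLin'_apply] using hK
  have hg : LinearMap.ker ((toLin' A).restrict hK' ^ k) = ⊤ := by
    rw [eq_top_iff]
    rintro ⟨x, hx⟩ -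
    rw [LinearMap.mem_ker, Module.End.pow_restrict]
    exact Subtype.ext (by simpa [← toLin'_pow] using hk x hx)
  have := Module.End.ker_pow_le_ker_pow_finrank _ k (hg ▸ Submodule.mem_top (x := (⟨v, hv⟩ : K)))
  rw [LinearMap.mem_ker, Module.End.pow_restrict] at this
  simpa [← toLin'_pow] using congrArg Subtype.val this

/-- The decomposition `W = W⁺ ⊕ W⁻` of a representation of `C_{2p}` into the sum of its
summands `V_k^+` and the sum of its summands `V_k^-`. -/
structure SignDecomposition (M : Matrix (Fin n) (Fin n) F) where
  plus : Submodule F (Fin n → F)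
  minus : Submodule F (Fin n → F)
  isCompl : IsCompl plus minus
  mulVec_mem_plus : ∀ v ∈ plus, M *ᵥ v ∈ plus
  mulVec_mem_minus : ∀ v ∈ minus, M *ᵥ v ∈ minus
  sub_one_pow_mulVec : ∀ v ∈ plus, ((M - 1) ^ finrank F plus) *ᵥ v = 0
  add_one_pow_mulVec : ∀ v ∈ minus, ((M + 1) ^ finrank F minus) *ᵥ v = 0

namespace SignDecomposition

def ofPowEqOne [NeZero n] (p : ℕ) [Fact p.Prime] [CharP F p] (h2 : (2 : F) ≠ 0)
    {M : Matrix (Fin n) (Fin n) F} (hM : M ^ (2 * p) = 1) : SignDecomposition M :=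
  have hplus : ∀ v ∈ LinearMap.ker (M ^ p - 1).mulVecLin, M *ᵥ v ∈ _ := fun _ =>
    mulVec_mem_ker_of_commute (((Commute.refl M).pow_left p).sub_left (Commute.one_left M))
  have hminus : ∀ v ∈ LinearMap.ker (M ^ p + 1).mulVecLin, M *ᵥ v ∈ _ := fun _ =>
    mulVec_mem_ker_of_commute (((Commute.refl M).pow_left p).add_left (Commute.one_left M))
  { plus := LinearMap.ker (M ^ p - 1).mulVecLin
    minus := LinearMap.ker (M ^ p + 1).mulVecLin
    isCompl := isCompl_ker_sub_one_ker_add_one (by rw [← pow_add, ← two_mul, hM]) h2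
    mulVec_mem_plus := hplus
    mulVec_mem_minus := hminus
    sub_one_pow_mulVec := fun _ => pow_finrank_mulVec_eq_zero
      (by simpa using mulVec_sub_smul_mem hplus 1) (k := p) fun v hv => by
        rwa [sub_pow_char_of_commute p (Commute.one_right M), one_pow]
    add_one_pow_mulVec := fun _ => pow_finrank_mulVec_eq_zero
      (by simpa using mulVec_sub_smul_mem hminus (-1)) (k := p) fun v hv => by
        rwa [add_pow_char_of_commute p (Commute.one_right M), one_pow] }

variable {M : Matrix (Fin n) (Fin n) F} (D : SignDecomposition M)

theorem finrank_plus_add_finrank_minus : finrank F D.plus + finrank F D.minus = n := by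
  rw [Submodule.finrank_add_eq_of_isCompl D.isCompl, finrank_fin_fun]

theorem sub_one_pow_eq_zero (h : finrank F D.plus = n) : (M - 1) ^ n = 0 := by
  have htop : D.plus = ⊤ := Submodule.eq_top_of_finrank_eq (by rwa [finrank_fin_fun])
  refine ext_iff_mulVec.mpr fun v => ?_
  have := D.sub_one_pow_mulVec v (htop ▸ Submodule.mem_top)
  rwa [h, ← zero_mulVec v] at this

theorem add_one_pow_eq_zero (h : finrank F D.minus = n) : (M + 1) ^ n = 0 := by
  have htop : D.minus = ⊤ := Submodule.eq_top_of_finrank_eq (by rwa [finrank_fin_fun])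
  refine ext_iff_mulVec.mpr fun v => ?_
  have := D.add_one_pow_mulVec v (htop ▸ Submodule.mem_top)
  rwa [h, ← zero_mulVec v] at this

theorem hasTrivialSummand (h : D.plus ≠ ⊥) (hfix : ∀ v ∈ D.plus, (M - 1) *ᵥ v = 0) :
    HasTrivialSummand F M :=
  hasTrivialSummand_of_isCompl D.isCompl h
    (fun v hv => by simpa [sub_mulVec, sub_eq_zero] using hfix v hv) D.mulVec_mem_minus

theorem finrank_plus_ne_one (hred : Reduced F M) : finrank F D.plus ≠ 1 := fun h =>
  hred (D.hasTrivialSummand (Submodule.one_le_finrank_iff.mp h.ge)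
    fun v hv => by simpa [h] using D.sub_one_pow_mulVec v hv)

theorem matSimilar_jmat_of_finrank_plus_eq_two {M : Matrix (Fin 3) (Fin 3) F}
    (D : SignDecomposition M) (hplus : finrank F D.plus = 2) {v : Fin 3 → F} (hv : v ∈ D.plus)
    (hMv : (M - 1) *ᵥ v ≠ 0) :
    MatSimilar F M (jmat F 3 (fun i => if i < 2 then 1 else -1) {0}) := by
  have hminus : finrank F D.minus = 1 := by have := D.finrank_plus_add_finrank_minus; omega
  obtain ⟨u, hu, hu0⟩ := Submodule.exists_mem_ne_zero_of_ne_bot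
    (Submodule.one_le_finrank_iff.mp hminus.ge)
  have hv2 : (M - 1) *ᵥ (M - 1) *ᵥ v = 0 := by
    simpa [hplus, sq, mulVec_mulVec] using D.sub_one_pow_mulVec v hv
  have hspan : Submodule.span F {v, (M - 1) *ᵥ v} ≤ D.plus := by
    rw [Submodule.span_le, Set.insert_subset_iff, Set.singleton_subset_iff]
    exact ⟨hv, by simpa using mulVec_sub_smul_mem D.mulVec_mem_plus 1 v hv⟩
  have hli := linearIndependent_three_of_pair (linearIndependent_pair_mulVec hv2 hMv)
    fun hu' => hu0 (Submodule.disjoint_def.mp D.isCompl.disjoint u (hspan hu') hu)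
  refine matSimilar_jmat_three_zero _ hli ?_ ?_ ?_
  · simp [sub_mulVec]
  · simpa [sub_mulVec, sub_eq_zero] using hv2
  · simpa [hminus, add_mulVec, add_eq_zero_iff_eq_neg] using D.add_one_pow_mulVec u hu

theorem matSimilar_of_reduced_two {M : Matrix (Fin 2) (Fin 2) F} (D : SignDecomposition M)
    (hred : Reduced F M) :
    MatSimilar F M (jmat F 2 (fun _ => 1) {0}) ∨ MatSimilar F M (jmat F 2 (fun _ => -1) ∅) ∨
      MatSimilar F M (jmat F 2 (fun _ => -1) {0}) := by
  have hsum := D.finrank_plus_add_finrank_minus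
  have hne := D.finrank_plus_ne_one hred
  obtain h | h : finrank F D.plus = 0 ∨ finrank F D.plus = 2 := by omega
  · exact .inr (matSimilar_jmat_of_sq_eq_zero (M := M) (s := (-1 : F))
      (by simpa using D.add_one_pow_eq_zero (by omega)))
  · rcases matSimilar_jmat_of_sq_eq_zero (M := M) (s := (1 : F))
      (by simpa using D.sub_one_pow_eq_zero h) with h' | h'
    · exact absurd (hasTrivialSummand_of_matSimilar_jmat (m := 1) (by simp) h') hred
    · exact .inl h'

theorem matSimilar_of_reduced_three {M : Matrix (Fin 3) (Fin 3) F} (D : SignDecomposition M)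
    (hred : Reduced F M) :
    MatSimilar F M (jmat F 3 (fun i => if i < 2 then 1 else -1) {0}) ∨
      MatSimilar F M (jmat F 3 (fun _ => 1) {0, 1}) ∨
      MatSimilar F M (jmat F 3 (fun _ => -1) ∅) ∨
      MatSimilar F M (jmat F 3 (fun _ => -1) {0, 1}) ∨
      MatSimilar F M (jmat F 3 (fun _ => -1) {0}) := by
  have hsum := D.finrank_plus_add_finrank_minus
  have hne := D.finrank_plus_ne_one hred
  obtain h | h | h : finrank F D.plus = 0 ∨ finrank F D.plus = 2 ∨ finrank F D.plus = 3 := by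
    omega
  · have := matSimilar_jmat_of_pow_three_eq_zero (M := M) (s := (-1 : F))
      (by simpa using D.add_one_pow_eq_zero (by omega))
    tauto
  · by_cases hfix : ∃ v ∈ D.plus, (M - 1) *ᵥ v ≠ 0
    · obtain ⟨v, hv, hMv⟩ := hfix
      exact .inl (D.matSimilar_jmat_of_finrank_plus_eq_two h hv hMv)
    · refine absurd (D.hasTrivialSummand (Submodule.one_le_finrank_iff.mp (by omega))
        fun v hv => ?_) hred
      by_contra hMv
      exact hfix ⟨v, hv, hMv⟩
  · rcases matSimilar_jmat_of_pow_three_eq_zero (M := M) (s := (1 : F))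
      (by simpa using D.sub_one_pow_eq_zero h) with h' | h' | h'
    · exact absurd (hasTrivialSummand_of_matSimilar_jmat (m := 2) (by simp) h') hred
    · exact absurd (hasTrivialSummand_of_matSimilar_jmat (m := 2) (by simp) h') hred
    · exact .inr (.inl h')

end SignDecomposition

end C2pRep

theorem stmt6 (p : ℕ) (hp : Nat.Prime p) (hp2 : 2 < p) [CharP F p]
    (n : ℕ) (M : Matrix (Fin n) (Fin n) F) (hM : M ^ (2 * p) = 1)
    (hred : Reduced F M) :
    (n = 2 →
      MatSimilar F M (jmat F n (fun _ => 1) {0}) ∨              -- V₂⁺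
      MatSimilar F M (jmat F n (fun _ => -1) ∅) ∨               -- 2V₁⁻
      MatSimilar F M (jmat F n (fun _ => -1) {0})) ∧            -- V₂⁻
    (n = 3 →
      MatSimilar F M (jmat F n (fun i => if i < 2 then 1 else -1) {0}) ∨  -- V₂⁺ ⊕ V₁⁻
      MatSimilar F M (jmat F n (fun _ => 1) {0, 1}) ∨           -- V₃⁺
      MatSimilar F M (jmat F n (fun _ => -1) ∅) ∨               -- 3V₁⁻
      MatSimilar F M (jmat F n (fun _ => -1) {0, 1}) ∨          -- V₃⁻
      MatSimilar F M (jmat F n (fun _ => -1) {0})) := by        -- V₂⁻ ⊕ V₁⁻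
  have : Fact p.Prime := ⟨hp⟩
  have h2 : (2 : F) ≠ 0 := Ring.two_ne_zero (by rw [ringChar.eq F p]; omega)
  refine ⟨fun hn => ?_, fun hn => ?_⟩ <;> subst hn
  · exact (C2pRep.SignDecomposition.ofPowEqOne p h2 hM).matSimilar_of_reduced_two hred
  · exact (C2pRep.SignDecomposition.ofPowEqOne p h2 hM).matSimilar_of_reduced_three hred
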